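/- arXiv:1907.11878 — 5 statements merged into one kernel-verified Lean document; each statement's English description precedes it below -/
import Mathlib

section
/- Suppose additionally that for each i ∈ {1,2,3} the matrices j·Iₙ + Jᵢ and j·Iₙ − Jᵢ are positive semidefinite and there exist nonzero vectors v, w ∈ ℂⁿ with Jᵢ v = j·v and Jᵢ w = −j·w. If the spin polarization-scaling map Φ is positive (i.e., Φ(X) is positive semidefinite for every positive semidefinite X ∈ Mₙ(ℂ)), then |λᵢ| ≤ 1 for each i ∈ {1,2,3}. -/
open Matrix Kronecker
open scoped ComplexOrder

/-- The spin value `j = (n-1)/2` for an `n`-dimensional system. -/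
noncomputable def spinJ (n : ℕ) : ℝ := ((n : ℝ) - 1) / 2

/-- The spin polarization-scaling map
`Φ(X) = (1/n)·tr(X)·Iₙ + (3/(j(j+1)n))·Σᵢ λᵢ·tr(X Jᵢ)·Jᵢ`. -/
noncomputable def Phi (n : ℕ) (J : Fin 3 → Matrix (Fin n) (Fin n) ℂ) (lam : Fin 3 → ℝ)
    (X : Matrix (Fin n) (Fin n) ℂ) : Matrix (Fin n) (Fin n) ℂ :=
  ((1 / (n : ℝ) : ℝ) : ℂ) • X.trace • (1 : Matrix (Fin n) (Fin n) ℂ) +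
    ((3 / (spinJ n * (spinJ n + 1) * n) : ℝ) : ℂ) •
      ∑ i : Fin 3, (lam i : ℂ) • (X * J i).trace • J i

/-! Φ is linear, fixes `1` because the `Jᵢ` are traceless, and maps `Jᵢ` to `λᵢ Jᵢ` because the
`Jᵢ` are trace-orthogonal with exactly the normalisation built into Φ. Hence
`Φ(j·1 + Jᵢ) = j·1 + λᵢ Jᵢ`, which is positive semidefinite since `j·1 + Jᵢ` is; its quadratic
form at eigenvectors of `Jᵢ` for the eigenvalues `±j` is a positive multiple of `j(1 ± λᵢ)`,
so `|λᵢ| ≤ 1`. -/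

lemma Matrix.PosSemidef.nonneg_of_mulVec_eq_smul {m 𝕜 : Type*} [Fintype m] [RCLike 𝕜]
    {A : Matrix m m 𝕜} (hA : A.PosSemidef) {v : m → 𝕜} (hv : v ≠ 0) {c : ℝ}
    (h : A *ᵥ v = (c : 𝕜) • v) : 0 ≤ c := by
  have hnn := hA.dotProduct_mulVec_nonneg v
  rw [h, dotProduct_smul, smul_eq_mul] at hnn
  by_contra! hc
  have : (c : 𝕜) * (star v ⬝ᵥ v) < 0 :=
    mul_neg_of_neg_of_pos (by exact_mod_cast hc) (dotProduct_star_self_pos_iff.mpr hv)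
  exact this.not_ge hnn

lemma Matrix.PosSemidef.nonneg_of_smul_one_add_smul {m 𝕜 : Type*} [Fintype m] [DecidableEq m]
    [RCLike 𝕜] {A : Matrix m m 𝕜} {a b μ : ℝ} (hA : ((a : 𝕜) • 1 + (b : 𝕜) • A).PosSemidef)
    {v : m → 𝕜} (hv : v ≠ 0) (h : A *ᵥ v = (μ : 𝕜) • v) : 0 ≤ a + b * μ := by
  refine hA.nonneg_of_mulVec_eq_smul hv ?_
  rw [add_mulVec, smul_mulVec, smul_mulVec, one_mulVec, h, smul_smul, ← add_smul]
  norm_cast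

lemma spinJ_pos {n : ℕ} (hn : 2 ≤ n) : 0 < spinJ n := by
  have : (2 : ℝ) ≤ n := by exact_mod_cast hn
  rw [spinJ]
  linarith

lemma spinJ_normalization {n : ℕ} (hn : 2 ≤ n) :
    3 / (spinJ n * (spinJ n + 1) * n) * (spinJ n * (spinJ n + 1) * (2 * spinJ n + 1) / 3) = 1 := by
  have hj := spinJ_pos hn
  have hj1 : spinJ n + 1 ≠ 0 := by linarith
  have h2j : 2 * spinJ n + 1 = n := by rw [spinJ]; ring
  rw [h2j]
  field_simp

section
variable {n : ℕ} (J : Fin 3 → Matrix (Fin n) (Fin n) ℂ) (lam : Fin 3 → ℝ)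

lemma Phi_add (X Y : Matrix (Fin n) (Fin n) ℂ) :
    Phi n J lam (X + Y) = Phi n J lam X + Phi n J lam Y := by
  simp only [Phi, add_mul, trace_add, add_smul, smul_add, Finset.sum_add_distrib]
  abel

lemma Phi_smul (c : ℂ) (X : Matrix (Fin n) (Fin n) ℂ) :
    Phi n J lam (c • X) = c • Phi n J lam X := by
  simp only [Phi, smul_mul, trace_smul, smul_add, Finset.smul_sum, smul_eq_mul, ← smul_smul,
    smul_comm c]

lemma Phi_one (hn : n ≠ 0) (htr : ∀ i, (J i).trace = 0) : Phi n J lam 1 = 1 := by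
  simp [Phi, htr, trace_one, hn]

lemma Phi_apply_J (hn : 2 ≤ n) (htr : ∀ i, (J i).trace = 0)
    (htr2 : ∀ k l, (J k * J l).trace =
      if k = l then ((spinJ n * (spinJ n + 1) * (2 * spinJ n + 1) / 3 : ℝ) : ℂ) else 0)
    (i : Fin 3) : Phi n J lam (J i) = (lam i : ℂ) • J i := by
  have hsum : ∑ k, (lam k : ℂ) • (J i * J k).trace • J k =
      (lam i : ℂ) • ((spinJ n * (spinJ n + 1) * (2 * spinJ n + 1) / 3 : ℝ) : ℂ) • J i := by
    rw [Finset.sum_eq_single i (fun k _ hk => by simp [htr2, hk.symm]) (by simp), htr2, if_pos rfl]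
  rw [Phi, htr, zero_smul, smul_zero, zero_add, hsum, smul_smul, smul_smul,
    ← Complex.ofReal_mul, ← Complex.ofReal_mul, mul_right_comm, spinJ_normalization hn, one_mul]

end

theorem necessary_condition_for_positivity_general
    (n : ℕ) (hn : 2 ≤ n) (J : Fin 3 → Matrix (Fin n) (Fin n) ℂ)
    (htr : ∀ i, (J i).trace = 0)
    (htr2 : ∀ k l, (J k * J l).trace =
      if k = l then ((spinJ n * (spinJ n + 1) * (2 * spinJ n + 1) / 3 : ℝ) : ℂ) else 0)
    (hpos : ∀ i, (((spinJ n : ℝ) : ℂ) • (1 : Matrix (Fin n) (Fin n) ℂ) + J i).PosSemidef ∧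
      (((spinJ n : ℝ) : ℂ) • (1 : Matrix (Fin n) (Fin n) ℂ) - J i).PosSemidef)
    (heig : ∀ i, (∃ v : Fin n → ℂ, v ≠ 0 ∧ J i *ᵥ v = ((spinJ n : ℝ) : ℂ) • v) ∧
      (∃ w : Fin n → ℂ, w ≠ 0 ∧ J i *ᵥ w = (-(spinJ n : ℝ) : ℂ) • w))
    (lam : Fin 3 → ℝ)
    (hPhi : ∀ X : Matrix (Fin n) (Fin n) ℂ, X.PosSemidef → (Phi n J lam X).PosSemidef) :
    ∀ i, |lam i| ≤ 1 := by
  intro i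
  have hj := spinJ_pos hn
  have hΦ : Phi n J lam (((spinJ n : ℝ) : ℂ) • 1 + J i) =
      ((spinJ n : ℝ) : ℂ) • 1 + (lam i : ℂ) • J i := by
    rw [Phi_add, Phi_smul, Phi_one J lam (by omega) htr, Phi_apply_J J lam hn htr htr2]
  have hM := hΦ ▸ hPhi _ (hpos i).1
  obtain ⟨⟨v, hv0, hv⟩, ⟨w, hw0, hw⟩⟩ := heig i
  have hlower := hM.nonneg_of_smul_one_add_smul (a := spinJ n) (b := lam i) (μ := spinJ n) hv0 hv
  have hupper := hM.nonneg_of_smul_one_add_smul (a := spinJ n) (b := lam i) (μ := -spinJ n) hw0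
    (by simpa using hw)
  exact abs_le.mpr ⟨by nlinarith, by nlinarith⟩

theorem necessary_condition_for_positivity
    (n : ℕ) (hn : 2 ≤ n) (J : Fin 3 → Matrix (Fin n) (Fin n) ℂ)
    (hherm : ∀ i, (J i).IsHermitian)
    (htr : ∀ i, (J i).trace = 0)
    (htr2 : ∀ k l, (J k * J l).trace =
      if k = l then ((spinJ n * (spinJ n + 1) * (2 * spinJ n + 1) / 3 : ℝ) : ℂ) else 0)
    (hpos : ∀ i, (((spinJ n : ℝ) : ℂ) • (1 : Matrix (Fin n) (Fin n) ℂ) + J i).PosSemidef ∧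
      (((spinJ n : ℝ) : ℂ) • (1 : Matrix (Fin n) (Fin n) ℂ) - J i).PosSemidef)
    (heig : ∀ i, (∃ v : Fin n → ℂ, v ≠ 0 ∧ J i *ᵥ v = ((spinJ n : ℝ) : ℂ) • v) ∧
      (∃ w : Fin n → ℂ, w ≠ 0 ∧ J i *ᵥ w = (-(spinJ n : ℝ) : ℂ) • w))
    (lam : Fin 3 → ℝ)
    (hPhi : ∀ X : Matrix (Fin n) (Fin n) ℂ, X.PosSemidef → (Phi n J lam X).PosSemidef) :
    ∀ i, |lam i| ≤ 1 :=
  necessary_condition_for_positivity_general n hn J htr htr2 hpos heig lam hPhi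
end

section
/- Suppose additionally that J₁ᵀ = J₁, J₂ᵀ = −J₂, J₃ᵀ = J₃. Then the spin polarization-scaling map Φ is completely positive (i.e., for every k ≥ 1, every linear map L on matrices indexed by Fin n × Fin k satisfying L(A ⊗ B) = Φ(A) ⊗ B for all A ∈ Mₙ(ℂ) and B ∈ M_k(ℂ), where ⊗ is the Kronecker product, maps positive semidefinite matrices to positive semidefinite matrices) if and only if the matrix Iₙ ⊗ Iₙ + (3/(j(j+1)))·(λ₁·J₁⊗J₁ − λ₂·J₂⊗J₂ + λ₃·J₃⊗J₃) is positive semidefinite. -/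
open Matrix Kronecker
open scoped ComplexOrder

/-!
Choi's theorem: `Φ` is completely positive iff its Choi matrix `C = ∑ Φ(E_pq) ⊗ E_pq` is positive
semidefinite. Any `L` with `L (A ⊗ B) = Φ A ⊗ B` is `Φ ⊗ id`, since Kronecker products span.
If `Φ ⊗ id` preserves positivity, applying it to the positive matrix `∑ E_pq ⊗ E_pq` gives `C ≥ 0`.
Conversely, writing `C = ∑ᵢ vᵢ vᵢᴴ` and reading each `vᵢ` as a matrix `Kᵢ` gives the Kraus form
`Φ X = ∑ᵢ Kᵢ X Kᵢᴴ`, so `(Φ ⊗ id) R = ∑ᵢ (Kᵢ ⊗ 1) R (Kᵢ ⊗ 1)ᴴ ≥ 0`.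

The Choi matrix of `X ↦ tr(X M) • N` is `N ⊗ Mᵀ`, so the transposition symmetries of the `Jᵢ`
make the Choi matrix of the spin map `1/n` times the matrix of the statement.
-/

namespace Matrix

variable {𝕜 : Type*} [RCLike 𝕜] {m n : Type*} [Fintype n] [DecidableEq n]

theorem posSemidef_smul_iff_of_pos [Fintype m] {c : 𝕜} (hc : 0 < c) {A : Matrix m m 𝕜} :
    (c • A).PosSemidef ↔ A.PosSemidef := by
  refine ⟨fun h => ?_, fun h => h.smul hc.le⟩
  simpa [smul_smul, hc.ne'] using h.smul (inv_pos.mpr hc).le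

def choiMatrix (Φ : Matrix n n 𝕜 →ₗ[𝕜] Matrix m m 𝕜) : Matrix (m × n) (m × n) 𝕜 :=
  of fun u v => Φ (single u.2 v.2 1) u.1 v.1

theorem choiMatrix_eq_sum_kronecker (Φ : Matrix n n 𝕜 →ₗ[𝕜] Matrix m m 𝕜) :
    choiMatrix Φ = ∑ p : n, ∑ q : n, Φ (single p q 1) ⊗ₖ single p q 1 := by
  ext ⟨a, b⟩ ⟨c, d⟩
  simp [choiMatrix, sum_apply, single_apply, ite_and]

theorem posSemidef_sum_single_kronecker_single :
    (∑ p : n, ∑ q : n, single p q (1 : 𝕜) ⊗ₖ single p q 1).PosSemidef := by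
  let ω : n × n → 𝕜 := fun u => if u.1 = u.2 then 1 else 0
  convert posSemidef_vecMulVec_self_star ω using 1
  ext ⟨a, b⟩ ⟨c, d⟩
  simp only [sum_apply, kroneckerMap_apply, single_apply, ite_and, mul_ite, mul_one, mul_zero,
    Finset.sum_ite_irrel, Finset.sum_ite_eq', Finset.mem_univ, ↓reduceIte, Finset.sum_const_zero,
    vecMulVec_apply, Pi.star_apply, RCLike.star_def, MonoidWithZeroHom.map_ite_one_zero, ω]
  simp only [← ite_and, and_comm, eq_comm]

def starCongruence (K : Matrix m n 𝕜) : Matrix n n 𝕜 →ₗ[𝕜] Matrix m m 𝕜 where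
  toFun X := K * X * Kᴴ
  map_add' X Y := by simp only [Matrix.mul_add, Matrix.add_mul]
  map_smul' c X := by simp only [Matrix.mul_smul, Matrix.smul_mul, RingHom.id_apply]

theorem exists_eq_sum_starCongruence_of_posSemidef_choiMatrix [Fintype m]
    {Φ : Matrix n n 𝕜 →ₗ[𝕜] Matrix m m 𝕜} (hΦ : (choiMatrix Φ).PosSemidef) :
    ∃ (r : ℕ) (K : Fin r → Matrix m n 𝕜), Φ = ∑ i, starCongruence (K i) := by
  obtain ⟨r, v, hv⟩ := posSemidef_iff_eq_sum_vecMulVec.mp hΦ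
  refine ⟨r, fun i => of fun a p => v i (a, p), ext_linearMap 𝕜 fun p q => LinearMap.ext_ring ?_⟩
  ext a c
  have := congrFun (congrFun hv (a, p)) (c, q)
  simp only [choiMatrix, of_apply] at this
  simp [this, starCongruence, sum_apply, vecMulVec_apply, mul_apply, single_apply, ite_and,
    Finset.sum_ite_eq]

variable [Fintype m] [DecidableEq m]

def ampliation (Φ : Matrix n n 𝕜 →ₗ[𝕜] Matrix m m 𝕜) (k : Type*) [Fintype k] [DecidableEq k] :
    Matrix (n × k) (n × k) 𝕜 →ₗ[𝕜] Matrix (m × k) (m × k) 𝕜 :=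
  (kroneckerLinearEquiv m m k k 𝕜).toLinearMap ∘ₗ Φ.rTensor _ ∘ₗ
    (kroneckerLinearEquiv n n k k 𝕜).symm.toLinearMap

variable {k : Type*} [Fintype k] [DecidableEq k]

@[simp]
theorem ampliation_kronecker (Φ : Matrix n n 𝕜 →ₗ[𝕜] Matrix m m 𝕜) (A : Matrix n n 𝕜)
    (B : Matrix k k 𝕜) : ampliation Φ k (A ⊗ₖ B) = Φ A ⊗ₖ B := by
  simp [ampliation]

theorem eq_ampliation_of_kronecker {Φ : Matrix n n 𝕜 →ₗ[𝕜] Matrix m m 𝕜}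
    {L : Matrix (n × k) (n × k) 𝕜 →ₗ[𝕜] Matrix (m × k) (m × k) 𝕜}
    (hL : ∀ A B, L (A ⊗ₖ B) = Φ A ⊗ₖ B) : L = ampliation Φ k := by
  ext1 R
  obtain ⟨x, rfl⟩ := (kroneckerLinearEquiv n n k k 𝕜).surjective R
  induction x using TensorProduct.induction_on with
  | zero => simp
  | tmul A B => simp [hL]
  | add x y hx hy => simp only [map_add, hx, hy]

theorem ampliation_sum {ι : Type*} (s : Finset ι) (Φ : ι → Matrix n n 𝕜 →ₗ[𝕜] Matrix m m 𝕜) :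
    ampliation (∑ i ∈ s, Φ i) k = ∑ i ∈ s, ampliation (Φ i) k := by
  refine (eq_ampliation_of_kronecker fun A B => ?_).symm
  ext ⟨a, b⟩ ⟨c, d⟩
  simp [sum_apply, Finset.sum_mul]

theorem ampliation_starCongruence (K : Matrix m n 𝕜) :
    ampliation (starCongruence K) k = starCongruence (K ⊗ₖ (1 : Matrix k k 𝕜)) := by
  refine (eq_ampliation_of_kronecker fun A B => ?_).symm
  simp [starCongruence, conjTranspose_kronecker, ← mul_kronecker_mul]

theorem posSemidef_choiMatrix_of_ampliation {Φ : Matrix n n 𝕜 →ₗ[𝕜] Matrix m m 𝕜}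
    (hΦ : ∀ R, R.PosSemidef → (ampliation Φ n R).PosSemidef) : (choiMatrix Φ).PosSemidef := by
  simpa [choiMatrix_eq_sum_kronecker, map_sum] using hΦ _ posSemidef_sum_single_kronecker_single

theorem posSemidef_ampliation_of_choiMatrix {Φ : Matrix n n 𝕜 →ₗ[𝕜] Matrix m m 𝕜}
    (hΦ : (choiMatrix Φ).PosSemidef) {R : Matrix (n × k) (n × k) 𝕜} (hR : R.PosSemidef) :
    (ampliation Φ k R).PosSemidef := by
  obtain ⟨r, K, rfl⟩ := exists_eq_sum_starCongruence_of_posSemidef_choiMatrix hΦ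
  rw [ampliation_sum, LinearMap.coe_sum, Finset.sum_apply]
  refine posSemidef_sum _ fun i _ => ?_
  rw [ampliation_starCongruence]
  exact hR.mul_mul_conjTranspose_same _

end Matrix

noncomputable def phiLinearMap (n : ℕ) (J : Fin 3 → Matrix (Fin n) (Fin n) ℂ) (lam : Fin 3 → ℝ) :
    Matrix (Fin n) (Fin n) ℂ →ₗ[ℂ] Matrix (Fin n) (Fin n) ℂ where
  toFun := Phi n J lam
  map_add' X Y := by
    simp only [Phi, Matrix.add_mul, trace_add, Fin.sum_univ_three]
    module
  map_smul' c X := by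
    simp only [Phi, Matrix.smul_mul, trace_smul, Fin.sum_univ_three, RingHom.id_apply, smul_eq_mul]
    module

theorem choiMatrix_phiLinearMap (n : ℕ) (J : Fin 3 → Matrix (Fin n) (Fin n) ℂ) (lam : Fin 3 → ℝ)
    (hT1 : (J 0)ᵀ = J 0) (hT2 : (J 1)ᵀ = -(J 1)) (hT3 : (J 2)ᵀ = J 2) :
    choiMatrix (phiLinearMap n J lam) = ((1 / (n : ℝ) : ℝ) : ℂ) •
      ((1 : Matrix (Fin n) (Fin n) ℂ) ⊗ₖ (1 : Matrix (Fin n) (Fin n) ℂ) +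
        ((3 / (spinJ n * (spinJ n + 1)) : ℝ) : ℂ) •
          ((lam 0 : ℂ) • (J 0 ⊗ₖ J 0) - (lam 1 : ℂ) • (J 1 ⊗ₖ J 1) +
            (lam 2 : ℂ) • (J 2 ⊗ₖ J 2))) := by
  ext ⟨a, b⟩ ⟨c, d⟩
  have h0 : J 0 d b = J 0 b d := congrFun (congrFun hT1 b) d
  have h1 : J 1 d b = -J 1 b d := congrFun (congrFun hT2 b) d
  have h2 : J 2 d b = J 2 b d := congrFun (congrFun hT3 b) d
  have hscale : ((3 / (spinJ n * (spinJ n + 1) * n) : ℝ) : ℂ) =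
      ((1 / (n : ℝ) : ℝ) : ℂ) * ((3 / (spinJ n * (spinJ n + 1)) : ℝ) : ℂ) := by
    rw [← Complex.ofReal_mul, one_div_mul_eq_div, div_div]
  simp only [choiMatrix, phiLinearMap, Phi, LinearMap.coe_mk, AddHom.coe_mk, of_apply,
    Matrix.add_apply, Matrix.smul_apply, Matrix.sub_apply, Fin.sum_univ_three, trace_single_mul,
    kronecker_apply, smul_eq_mul, one_mul, h0, h1, h2, hscale, one_apply]
  rcases eq_or_ne b d with rfl | hbd
  · simp only [trace_single_eq_same]
    split_ifs <;> ring
  · simp only [trace_single_eq_of_ne _ _ _ hbd]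
    split_ifs <;> ring

theorem complete_positivity_iff_choi_posSemidef_general
    (n : ℕ) (hn : 2 ≤ n) (J : Fin 3 → Matrix (Fin n) (Fin n) ℂ)
    (hT1 : (J 0)ᵀ = J 0) (hT2 : (J 1)ᵀ = -(J 1)) (hT3 : (J 2)ᵀ = J 2)
    (lam : Fin 3 → ℝ) :
    (∀ k : ℕ, 1 ≤ k →
      ∀ L : Matrix (Fin n × Fin k) (Fin n × Fin k) ℂ →ₗ[ℂ]
            Matrix (Fin n × Fin k) (Fin n × Fin k) ℂ,
        (∀ (A : Matrix (Fin n) (Fin n) ℂ) (B : Matrix (Fin k) (Fin k) ℂ),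
          L (A ⊗ₖ B) = Phi n J lam A ⊗ₖ B) →
        ∀ R : Matrix (Fin n × Fin k) (Fin n × Fin k) ℂ, R.PosSemidef → (L R).PosSemidef) ↔
    ((1 : Matrix (Fin n) (Fin n) ℂ) ⊗ₖ (1 : Matrix (Fin n) (Fin n) ℂ) +
      ((3 / (spinJ n * (spinJ n + 1)) : ℝ) : ℂ) •
        ((lam 0 : ℂ) • (J 0 ⊗ₖ J 0) - (lam 1 : ℂ) • (J 1 ⊗ₖ J 1) +
          (lam 2 : ℂ) • (J 2 ⊗ₖ J 2))).PosSemidef := by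
  have h_inv_n_pos : (0 : ℂ) < ((1 / (n : ℝ) : ℝ) : ℂ) := by
    have : 0 < n := by omega
    exact_mod_cast (by positivity : (0 : ℝ) < 1 / n)
  rw [← posSemidef_smul_iff_of_pos h_inv_n_pos, ← choiMatrix_phiLinearMap n J lam hT1 hT2 hT3]
  constructor
  · intro hCP
    exact posSemidef_choiMatrix_of_ampliation fun R hR =>
      hCP n (by omega) _ (ampliation_kronecker _) R hR
  · intro hChoi k _ L hL R hR
    rw [eq_ampliation_of_kronecker (Φ := phiLinearMap n J lam) hL]
    exact posSemidef_ampliation_of_choiMatrix hChoi hR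

theorem complete_positivity_iff_choi_posSemidef
    (n : ℕ) (hn : 2 ≤ n) (J : Fin 3 → Matrix (Fin n) (Fin n) ℂ)
    (hherm : ∀ i, (J i).IsHermitian)
    (htr : ∀ i, (J i).trace = 0)
    (htr2 : ∀ k l, (J k * J l).trace =
      if k = l then ((spinJ n * (spinJ n + 1) * (2 * spinJ n + 1) / 3 : ℝ) : ℂ) else 0)
    (hT1 : (J 0)ᵀ = J 0) (hT2 : (J 1)ᵀ = -(J 1)) (hT3 : (J 2)ᵀ = J 2)
    (lam : Fin 3 → ℝ) :
    (∀ k : ℕ, 1 ≤ k →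
      ∀ L : Matrix (Fin n × Fin k) (Fin n × Fin k) ℂ →ₗ[ℂ]
            Matrix (Fin n × Fin k) (Fin n × Fin k) ℂ,
        (∀ (A : Matrix (Fin n) (Fin n) ℂ) (B : Matrix (Fin k) (Fin k) ℂ),
          L (A ⊗ₖ B) = Phi n J lam A ⊗ₖ B) →
        ∀ R : Matrix (Fin n × Fin k) (Fin n × Fin k) ℂ, R.PosSemidef → (L R).PosSemidef) ↔
    ((1 : Matrix (Fin n) (Fin n) ℂ) ⊗ₖ (1 : Matrix (Fin n) (Fin n) ℂ) +
      ((3 / (spinJ n * (spinJ n + 1)) : ℝ) : ℂ) •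
        ((lam 0 : ℂ) • (J 0 ⊗ₖ J 0) - (lam 1 : ℂ) • (J 1 ⊗ₖ J 1) +
          (lam 2 : ℂ) • (J 2 ⊗ₖ J 2))).PosSemidef :=
  complete_positivity_iff_choi_posSemidef_general n hn J hT1 hT2 hT3 lam
end

section
/- For real numbers λ₁,λ₂,λ₃, the 4×4 matrix I₂ ⊗ I₂ + λ₁·σ₁⊗σ₁ − λ₂·σ₂⊗σ₂ + λ₃·σ₃⊗σ₃ is positive semidefinite if and only if 1 + λ₃ ≥ |λ₁ + λ₂| and 1 − λ₃ ≥ |λ₁ − λ₂|. -/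
/-!
The four Pauli products σᵢ ⊗ σᵢ commute and are simultaneously diagonalised by the (unnormalised)
Bell vectors e₀₀ ± e₁₁, e₀₁ ± e₁₀, on which the matrix acts with the eigenvalues
1 + λ₃ ± (λ₁ + λ₂) and 1 − λ₃ ± (λ₁ − λ₂). A combination of rank-one projections onto pairwise
orthogonal nonzero vectors is positive semidefinite iff its coefficients are nonnegative, and
nonnegativity of these four eigenvalues is the pair of absolute-value inequalities.
-/

open Matrix Kronecker
open scoped ComplexOrder

/-- The Pauli matrix σ₁. -/
def sigma1 : Matrix (Fin 2) (Fin 2) ℂ := !![0, 1; 1, 0]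

/-- The Pauli matrix σ₂. -/
def sigma2 : Matrix (Fin 2) (Fin 2) ℂ := !![0, -Complex.I; Complex.I, 0]

/-- The Pauli matrix σ₃. -/
def sigma3 : Matrix (Fin 2) (Fin 2) ℂ := !![1, 0; 0, -1]

namespace Matrix

variable {ι κ 𝕜 : Type*} [Fintype ι] [Fintype κ] [RCLike 𝕜]

theorem sum_smul_vecMulVec_mulVec_of_pairwise_orthogonal {v : κ → ι → 𝕜}
    (hv : Pairwise fun i j => star (v i) ⬝ᵥ v j = 0) (c : κ → 𝕜) (k : κ) :
    (∑ j, c j • vecMulVec (v j) (star (v j))) *ᵥ v k = (c k * (star (v k) ⬝ᵥ v k)) • v k := by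
  rw [sum_mulVec, Finset.sum_eq_single k]
  · simp [smul_mulVec, vecMulVec_mulVec, smul_smul]
  · intro j _ hjk
    simp [smul_mulVec, vecMulVec_mulVec, hv hjk]
  · simp

theorem posSemidef_sum_smul_vecMulVec_iff {v : κ → ι → 𝕜}
    (hv : Pairwise fun i j => star (v i) ⬝ᵥ v j = 0) (hv₀ : ∀ k, v k ≠ 0) (c : κ → 𝕜) :
    (∑ k, c k • vecMulVec (v k) (star (v k))).PosSemidef ↔ ∀ k, 0 ≤ c k := by
  refine ⟨fun h k => ?_, fun hc =>
    posSemidef_sum _ fun k _ => (posSemidef_vecMulVec_self_star _).smul (hc k)⟩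
  have hquad := h.dotProduct_mulVec_nonneg (v k)
  rw [sum_smul_vecMulVec_mulVec_of_pairwise_orthogonal hv, dotProduct_smul, smul_eq_mul] at hquad
  have hpos : 0 < star (v k) ⬝ᵥ v k := dotProduct_star_self_pos_iff.mpr (hv₀ k)
  have hinv : 0 < (star (v k) ⬝ᵥ v k * star (v k) ⬝ᵥ v k)⁻¹ := inv_pos.mpr (mul_pos hpos hpos)
  simpa [hpos.ne', mul_assoc] using mul_nonneg hquad hinv.le

end Matrix

/-- Unnormalised Bell vectors, with components given as 2 × 2 arrays. -/
def bellVec : Fin 4 → Fin 2 × Fin 2 → ℂ := fun k p =>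
  ![!![1, 0; 0, 1], !![1, 0; 0, -1], !![0, 1; 1, 0], !![0, 1; -1, 0]] k p.1 p.2

theorem star_bellVec_dotProduct_bellVec (i j : Fin 4) :
    star (bellVec i) ⬝ᵥ bellVec j = if i = j then 2 else 0 := by
  fin_cases i <;> fin_cases j <;>
    simp [bellVec, dotProduct, Fintype.sum_prod_type, one_add_one_eq_two]

theorem pairwise_orthogonal_bellVec : Pairwise fun i j => star (bellVec i) ⬝ᵥ bellVec j = 0 :=
  fun i j hij => by simp [star_bellVec_dotProduct_bellVec, hij]

theorem bellVec_ne_zero (k : Fin 4) : bellVec k ≠ 0 := fun h => by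
  simpa [h] using star_bellVec_dotProduct_bellVec k k

/-- The Bell vectors have squared norm 2, hence the halved eigenvalues. -/
theorem qubitChoi_eq_sum_bellVec (l1 l2 l3 : ℝ) :
    (1 : Matrix (Fin 2) (Fin 2) ℂ) ⊗ₖ (1 : Matrix (Fin 2) (Fin 2) ℂ) +
      (l1 : ℂ) • (sigma1 ⊗ₖ sigma1) - (l2 : ℂ) • (sigma2 ⊗ₖ sigma2) +
      (l3 : ℂ) • (sigma3 ⊗ₖ sigma3) =
    ∑ k, ((![1 + l3 + (l1 + l2), 1 + l3 - (l1 + l2), 1 - l3 + (l1 - l2), 1 - l3 - (l1 - l2)] k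
      / 2 : ℝ) : ℂ) • vecMulVec (bellVec k) (star (bellVec k)) := by
  ext ⟨i, j⟩ ⟨k, l⟩
  fin_cases i <;> fin_cases j <;> fin_cases k <;> fin_cases l <;>
    simp [Fin.sum_univ_four, bellVec, sigma1, sigma2, sigma3, vecMulVec, one_apply] <;> ring

theorem qubit_choi_posSemidef_iff (l1 l2 l3 : ℝ) :
    ((1 : Matrix (Fin 2) (Fin 2) ℂ) ⊗ₖ (1 : Matrix (Fin 2) (Fin 2) ℂ) +
      (l1 : ℂ) • (sigma1 ⊗ₖ sigma1) - (l2 : ℂ) • (sigma2 ⊗ₖ sigma2) +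
      (l3 : ℂ) • (sigma3 ⊗ₖ sigma3)).PosSemidef ↔
    1 + l3 ≥ |l1 + l2| ∧ 1 - l3 ≥ |l1 - l2| := by
  rw [qubitChoi_eq_sum_bellVec,
    posSemidef_sum_smul_vecMulVec_iff pairwise_orthogonal_bellVec bellVec_ne_zero]
  simp only [Fin.forall_fin_succ, Complex.zero_le_real, Fin.isValue, cons_val_zero, cons_val_succ,
    cons_val_fin_one, forall_const, ge_iff_le, abs_le]
  constructor
  · rintro ⟨h₁, h₂, h₃, h₄⟩
    exact ⟨⟨by linarith, by linarith⟩, by linarith, by linarith⟩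
  · rintro ⟨⟨h₁, h₂⟩, h₃, h₄⟩
    exact ⟨by linarith, by linarith, by linarith, by linarith⟩
end

section
/- Suppose additionally that J₁ᵀ = J₁, J₂ᵀ = −J₂, J₃ᵀ = J₃. If the matrix Ω := Iₙ ⊗ Iₙ + (3/(j(j+1)))·(λ₁·J₁⊗J₁ − λ₂·J₂⊗J₂ + λ₃·J₃⊗J₃) is separable, i.e., there exist a finite index set K and positive semidefinite matrices A_k, B_k ∈ Mₙ(ℂ) (k ∈ K) with Ω = Σ_{k∈K} A_k ⊗ B_k, then both matrices Iₙ ⊗ Iₙ + (3/(j(j+1)))·(λ₁·J₁⊗J₁ + λ₂·J₂⊗J₂ + λ₃·J₃⊗J₃) and Iₙ ⊗ Iₙ + (3/(j(j+1)))·(λ₁·J₁⊗J₁ − λ₂·J₂⊗J₂ + λ₃·J₃⊗J₃) are positive semidefinite. -/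
open Matrix Kronecker
open scoped ComplexOrder

/-!
Peres' criterion: transposing the first tensor factor of a separable matrix `∑ₖ Aₖ ⊗ Bₖ` gives
`∑ₖ Aₖᵀ ⊗ Bₖ`, again a sum of Kronecker products of positive semidefinite matrices. For the
matrix `Ω` of the theorem, `J₁, J₃` are symmetric and `J₂` antisymmetric, so this partial
transpose flips the sign of the `J₂ ⊗ J₂` term and turns `Ω` into the other matrix.
-/

namespace Matrix

variable {l m n p R 𝕜 : Type*}

def partialTransposeFst [CommSemiring R] :
    Matrix (l × m) (n × p) R →ₗ[R] Matrix (n × m) (l × p) R where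
  toFun M := fun i j => M (j.1, i.2) (i.1, j.2)
  map_add' _ _ := rfl
  map_smul' _ _ := rfl

@[simp]
theorem partialTransposeFst_kronecker [CommSemiring R] (A : Matrix l n R) (B : Matrix m p R) :
    partialTransposeFst (A ⊗ₖ B) = Aᵀ ⊗ₖ B :=
  rfl

theorem neg_kronecker [Mul R] [HasDistribNeg R] (A : Matrix l m R) (B : Matrix n p R) :
    (-A) ⊗ₖ B = -(A ⊗ₖ B) := by
  ext ⟨_, _⟩ ⟨_, _⟩
  exact neg_mul _ _

def IsSeparable [RCLike 𝕜] [Fintype m] [Fintype n] (M : Matrix (m × n) (m × n) 𝕜) : Prop :=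
  ∃ (k : ℕ) (A : Fin k → Matrix m m 𝕜) (B : Fin k → Matrix n n 𝕜),
    (∀ i, (A i).PosSemidef) ∧ (∀ i, (B i).PosSemidef) ∧ M = ∑ i, A i ⊗ₖ B i

variable [RCLike 𝕜] [Fintype m] [Fintype n]

theorem posSemidef_sum_kronecker {ι : Type*} [Fintype ι] {A : ι → Matrix m m 𝕜}
    {B : ι → Matrix n n 𝕜} (hA : ∀ i, (A i).PosSemidef) (hB : ∀ i, (B i).PosSemidef) :
    (∑ i, A i ⊗ₖ B i).PosSemidef :=
  posSemidef_sum _ fun i _ => (hA i).kronecker (hB i)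

theorem IsSeparable.posSemidef {M : Matrix (m × n) (m × n) 𝕜} (hM : M.IsSeparable) :
    M.PosSemidef := by
  obtain ⟨k, A, B, hA, hB, rfl⟩ := hM
  exact posSemidef_sum_kronecker hA hB

theorem IsSeparable.posSemidef_partialTransposeFst {M : Matrix (m × n) (m × n) 𝕜}
    (hM : M.IsSeparable) : (partialTransposeFst M).PosSemidef := by
  obtain ⟨k, A, B, hA, hB, rfl⟩ := hM
  simpa only [map_sum, partialTransposeFst_kronecker] using
    posSemidef_sum_kronecker (fun i => (hA i).transpose) hB

end Matrix

theorem separable_choi_implies_ppt_general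
    (n : ℕ) (J : Fin 3 → Matrix (Fin n) (Fin n) ℂ)
    (hT1 : (J 0)ᵀ = J 0) (hT2 : (J 1)ᵀ = -(J 1)) (hT3 : (J 2)ᵀ = J 2)
    (lam : Fin 3 → ℝ)
    (hsep : ∃ (m : ℕ) (A B : Fin m → Matrix (Fin n) (Fin n) ℂ),
      (∀ k, (A k).PosSemidef) ∧ (∀ k, (B k).PosSemidef) ∧
      (1 : Matrix (Fin n) (Fin n) ℂ) ⊗ₖ (1 : Matrix (Fin n) (Fin n) ℂ) +
        ((3 / (spinJ n * (spinJ n + 1)) : ℝ) : ℂ) •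
          ((lam 0 : ℂ) • (J 0 ⊗ₖ J 0) - (lam 1 : ℂ) • (J 1 ⊗ₖ J 1) +
            (lam 2 : ℂ) • (J 2 ⊗ₖ J 2)) = ∑ k, A k ⊗ₖ B k) :
    ((1 : Matrix (Fin n) (Fin n) ℂ) ⊗ₖ (1 : Matrix (Fin n) (Fin n) ℂ) +
      ((3 / (spinJ n * (spinJ n + 1)) : ℝ) : ℂ) •
        ((lam 0 : ℂ) • (J 0 ⊗ₖ J 0) + (lam 1 : ℂ) • (J 1 ⊗ₖ J 1) +
          (lam 2 : ℂ) • (J 2 ⊗ₖ J 2))).PosSemidef ∧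
    ((1 : Matrix (Fin n) (Fin n) ℂ) ⊗ₖ (1 : Matrix (Fin n) (Fin n) ℂ) +
      ((3 / (spinJ n * (spinJ n + 1)) : ℝ) : ℂ) •
        ((lam 0 : ℂ) • (J 0 ⊗ₖ J 0) - (lam 1 : ℂ) • (J 1 ⊗ₖ J 1) +
          (lam 2 : ℂ) • (J 2 ⊗ₖ J 2))).PosSemidef := by
  have hΩ : IsSeparable _ := hsep
  refine ⟨?_, hΩ.posSemidef⟩
  simpa only [map_add, map_sub, map_smul, partialTransposeFst_kronecker, transpose_one, hT1, hT2,
    hT3, neg_kronecker, smul_neg, sub_neg_eq_add] using hΩ.posSemidef_partialTransposeFst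

theorem separable_choi_implies_ppt
    (n : ℕ) (hn : 2 ≤ n) (J : Fin 3 → Matrix (Fin n) (Fin n) ℂ)
    (hherm : ∀ i, (J i).IsHermitian)
    (hT1 : (J 0)ᵀ = J 0) (hT2 : (J 1)ᵀ = -(J 1)) (hT3 : (J 2)ᵀ = J 2)
    (lam : Fin 3 → ℝ)
    (hsep : ∃ (m : ℕ) (A B : Fin m → Matrix (Fin n) (Fin n) ℂ),
      (∀ k, (A k).PosSemidef) ∧ (∀ k, (B k).PosSemidef) ∧
      (1 : Matrix (Fin n) (Fin n) ℂ) ⊗ₖ (1 : Matrix (Fin n) (Fin n) ℂ) +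
        ((3 / (spinJ n * (spinJ n + 1)) : ℝ) : ℂ) •
          ((lam 0 : ℂ) • (J 0 ⊗ₖ J 0) - (lam 1 : ℂ) • (J 1 ⊗ₖ J 1) +
            (lam 2 : ℂ) • (J 2 ⊗ₖ J 2)) = ∑ k, A k ⊗ₖ B k) :
    ((1 : Matrix (Fin n) (Fin n) ℂ) ⊗ₖ (1 : Matrix (Fin n) (Fin n) ℂ) +
      ((3 / (spinJ n * (spinJ n + 1)) : ℝ) : ℂ) •
        ((lam 0 : ℂ) • (J 0 ⊗ₖ J 0) + (lam 1 : ℂ) • (J 1 ⊗ₖ J 1) +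
          (lam 2 : ℂ) • (J 2 ⊗ₖ J 2))).PosSemidef ∧
    ((1 : Matrix (Fin n) (Fin n) ℂ) ⊗ₖ (1 : Matrix (Fin n) (Fin n) ℂ) +
      ((3 / (spinJ n * (spinJ n + 1)) : ℝ) : ℂ) •
        ((lam 0 : ℂ) • (J 0 ⊗ₖ J 0) - (lam 1 : ℂ) • (J 1 ⊗ₖ J 1) +
          (lam 2 : ℂ) • (J 2 ⊗ₖ J 2))).PosSemidef :=
  separable_choi_implies_ppt_general n J hT1 hT2 hT3 lam hsep
end

section
/- Suppose additionally that J₁ᵀ = J₁, J₂ᵀ = −J₂, J₃ᵀ = J₃. Suppose some linear map L on matrices indexed by Fin n × Fin n satisfying L(A ⊗ B) = Φ(A) ⊗ Φ(B) for all A, B ∈ Mₙ(ℂ) has the property that for every vector ψ ∈ ℂⁿ ⊗ ℂⁿ ≅ ℂ^{n²} the matrix L(|ψ⟩⟨ψ|) is separable (i.e., Φ is 2-locally entanglement annihilating). Then the matrix Iₙ ⊗ Iₙ + (3/(j(j+1)))·(λ₁²·J₁⊗J₁ − λ₂²·J₂⊗J₂ + λ₃²·J₃⊗J₃) (which is n²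 times the Choi matrix of Φ∘Φ) is separable. -/
open Matrix Kronecker
open scoped ComplexOrder

/-- Separability of a matrix on `ℂⁿ ⊗ ℂⁿ`: it is a finite sum of Kronecker products of
positive semidefinite matrices. -/
def MatSeparable (n : ℕ) (R : Matrix (Fin n × Fin n) (Fin n × Fin n) ℂ) : Prop :=
  ∃ (m : ℕ) (A B : Fin m → Matrix (Fin n) (Fin n) ℂ),
    (∀ k, (A k).PosSemidef) ∧ (∀ k, (B k).PosSemidef) ∧ R = ∑ k, A k ⊗ₖ B k

/-!
Feed the unnormalized maximally entangled vector `ψ = ∑ᵤ eᵤ ⊗ eᵤ` to `L`. Since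
`|ψ⟩⟨ψ| = ∑ᵤᵥ Eᵤᵥ ⊗ Eᵤᵥ`, the separable matrix `L |ψ⟩⟨ψ|` is `∑ᵤᵥ Φ(Eᵤᵥ) ⊗ Φ(Eᵤᵥ)`. For a map of
the form `Φ X = ∑ₖ tr(X Kₖ) Mₖ` this sum equals `∑ₖₗ tr(Kₖ Kₗᵀ) Mₖ ⊗ Mₗ`; as the `Jᵢ` are traceless,
trace-orthogonal and satisfy `Jᵢᵀ = ±Jᵢ`, only the diagonal terms survive, with the signs of the
transposes, and the result is `1/n` times the matrix in question.
-/

namespace Matrix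

variable {R ι m : Type*} [CommRing R] [Fintype ι] [Fintype m]

theorem sum_smul_kronecker_sum_smul {p q r s : Type*} (a b : ι → R) (M : ι → Matrix p q R)
    (N : ι → Matrix r s R) :
    (∑ k, a k • M k) ⊗ₖ (∑ l, b l • N l) = ∑ k, ∑ l, (a k * b l) • (M k ⊗ₖ N l) := by
  ext x y
  simp only [kroneckerMap_apply, sum_apply, smul_apply, smul_eq_mul, Finset.sum_mul_sum]
  exact Finset.sum_congr rfl fun k _ => Finset.sum_congr rfl fun l _ => by ring

theorem trace_mul_transpose_eq_sum (A B : Matrix m m R) :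
    (A * Bᵀ).trace = ∑ u, ∑ v, A v u * B v u := by
  rw [Finset.sum_comm]
  simp [trace, mul_apply]

variable [DecidableEq m]

theorem sum_kronecker_sum_trace_single_mul_smul (K M : ι → Matrix m m R) :
    ∑ u : m, ∑ v : m, (∑ k, (single u v 1 * K k).trace • M k) ⊗ₖ
        (∑ l, (single u v 1 * K l).trace • M l) =
      ∑ k, ∑ l, (K k * (K l)ᵀ).trace • (M k ⊗ₖ M l) := by
  simp only [trace_single_mul, one_smul, sum_smul_kronecker_sum_smul, trace_mul_transpose_eq_sum,
    Finset.sum_smul]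
  simp only [Finset.sum_comm (s := (Finset.univ : Finset m)) (t := (Finset.univ : Finset ι))]

theorem sum_single_kronecker_single_eq_outer_diag {S : Type*} [Semiring S] [StarRing S] :
    ∑ u : m, ∑ v : m, single u v (1 : S) ⊗ₖ single u v 1 =
      of fun x y : m × m =>
        (if x.1 = x.2 then (1 : S) else 0) * star (if y.1 = y.2 then (1 : S) else 0) := by
  ext ⟨a, c⟩ ⟨b, d⟩
  simp only [of_apply, sum_apply, kroneckerMap_apply]
  simp [single, ite_and, mul_ite, ite_mul, Finset.sum_ite_eq, eq_comm]
  split_ifs <;> simp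

variable [DecidableEq ι]

theorem sum_map_single_kronecker_map_single (Φ : Matrix m m R → Matrix m m R)
    (J : ι → Matrix m m R) (a t : R) (b ε : ι → R)
    (hΦ : ∀ X, Φ X = X.trace • a • 1 + ∑ i, (X * J i).trace • b i • J i)
    (htr : ∀ i, (J i).trace = 0)
    (horth : ∀ k l, (J k * J l).trace = if k = l then t else 0)
    (hT : ∀ i, (J i)ᵀ = ε i • J i) :
    ∑ u : m, ∑ v : m, Φ (single u v 1) ⊗ₖ Φ (single u v 1) =
      (Fintype.card m * a ^ 2) • (1 ⊗ₖ 1) + ∑ i, (ε i * t * b i ^ 2) • (J i ⊗ₖ J i) := by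
  have hΦ' : ∀ X, Φ X =
      ∑ o : Option ι, (X * o.elim 1 J).trace • o.elim (a • 1) (fun i => b i • J i) := by
    intro X
    simp [hΦ, Fintype.sum_option]
  simp only [hΦ']
  rw [sum_kronecker_sum_trace_single_mul_smul]
  simp only [Fintype.sum_option, Option.elim,
    transpose_one, mul_one, one_mul, hT, trace_one, htr, mul_smul_comm, trace_smul, horth]
  simp only [smul_zero, zero_smul, Finset.sum_const_zero, add_zero, zero_add, smul_ite, ite_smul,
    Finset.sum_ite_eq, Finset.mem_univ, if_true]
  simp only [smul_kronecker, kronecker_smul, smul_smul, smul_eq_mul]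
  simp only [sq]

end Matrix

theorem MatSeparable.real_smul_of_nonneg {n : ℕ}
    {R : Matrix (Fin n × Fin n) (Fin n × Fin n) ℂ} (hR : MatSeparable n R) {c : ℝ} (hc : 0 ≤ c) :
    MatSeparable n ((c : ℂ) • R) := by
  obtain ⟨m, A, B, hA, hB, rfl⟩ := hR
  refine ⟨m, fun k => (c : ℂ) • A k, B, fun k => (hA k).smul (by exact_mod_cast hc), hB, ?_⟩
  simp only [Finset.smul_sum, smul_kronecker]

theorem Phi_eq_trace_smul_add_sum (n : ℕ) (J : Fin 3 → Matrix (Fin n) (Fin n) ℂ)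
    (lam : Fin 3 → ℝ) (X : Matrix (Fin n) (Fin n) ℂ) :
    Phi n J lam X = X.trace • ((1 / (n : ℝ) : ℝ) : ℂ) • 1 +
      ∑ i, (X * J i).trace • (((3 / (spinJ n * (spinJ n + 1) * n) : ℝ) : ℂ) * lam i) • J i := by
  simp only [Phi, Finset.smul_sum, smul_smul]
  congr 1
  · rw [mul_comm]
  · exact Finset.sum_congr rfl fun i _ => by congr 1; ring

theorem sum_Phi_single_kronecker_Phi_single {n : ℕ} (hn : 2 ≤ n)
    (J : Fin 3 → Matrix (Fin n) (Fin n) ℂ) (htr : ∀ i, (J i).trace = 0)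
    (htr2 : ∀ k l, (J k * J l).trace =
      if k = l then ((spinJ n * (spinJ n + 1) * (2 * spinJ n + 1) / 3 : ℝ) : ℂ) else 0)
    (hT1 : (J 0)ᵀ = J 0) (hT2 : (J 1)ᵀ = -(J 1)) (hT3 : (J 2)ᵀ = J 2) (lam : Fin 3 → ℝ) :
    ∑ u : Fin n, ∑ v : Fin n, Phi n J lam (single u v 1) ⊗ₖ Phi n J lam (single u v 1) =
      ((1 / (n : ℝ) : ℝ) : ℂ) •
        ((1 : Matrix (Fin n) (Fin n) ℂ) ⊗ₖ (1 : Matrix (Fin n) (Fin n) ℂ) +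
          ((3 / (spinJ n * (spinJ n + 1)) : ℝ) : ℂ) •
            (((lam 0 ^ 2 : ℝ) : ℂ) • (J 0 ⊗ₖ J 0) - ((lam 1 ^ 2 : ℝ) : ℂ) • (J 1 ⊗ₖ J 1) +
              ((lam 2 ^ 2 : ℝ) : ℂ) • (J 2 ⊗ₖ J 2))) := by
  have hT : ∀ i, (J i)ᵀ = ![(1 : ℂ), -1, 1] i • J i := by
    intro i
    fin_cases i <;> simp [hT1, hT2, hT3]
  rw [sum_map_single_kronecker_map_single _ J _ _ _ _ (Phi_eq_trace_smul_add_sum n J lam) htr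
    htr2 hT, Fin.sum_univ_three, Fintype.card_fin]
  have hn' : (2 : ℝ) ≤ n := by exact_mod_cast hn
  have hj0 : (spinJ n : ℂ) ≠ 0 := by exact_mod_cast (by unfold spinJ; linarith : spinJ n ≠ 0)
  have hj1 : (spinJ n : ℂ) + 1 ≠ 0 := by
    exact_mod_cast (by unfold spinJ; linarith : spinJ n + 1 ≠ 0)
  have hn2j : (n : ℂ) = 2 * spinJ n + 1 := by
    exact_mod_cast (by unfold spinJ; ring : (n : ℝ) = 2 * spinJ n + 1)
  have h2j1 : 2 * (spinJ n : ℂ) + 1 ≠ 0 := by rw [← hn2j]; exact_mod_cast (by omega : n ≠ 0)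
  match_scalars <;> push_cast <;> simp only [hn2j] <;> field_simp

theorem two_locally_entanglement_annihilating_implies_square_eb_general
    (n : ℕ) (hn : 2 ≤ n) (J : Fin 3 → Matrix (Fin n) (Fin n) ℂ)
    (htr : ∀ i, (J i).trace = 0)
    (htr2 : ∀ k l, (J k * J l).trace =
      if k = l then ((spinJ n * (spinJ n + 1) * (2 * spinJ n + 1) / 3 : ℝ) : ℂ) else 0)
    (hT1 : (J 0)ᵀ = J 0) (hT2 : (J 1)ᵀ = -(J 1)) (hT3 : (J 2)ᵀ = J 2)
    (lam : Fin 3 → ℝ)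
    (hlea : ∃ L : Matrix (Fin n × Fin n) (Fin n × Fin n) ℂ →ₗ[ℂ]
          Matrix (Fin n × Fin n) (Fin n × Fin n) ℂ,
      (∀ A B : Matrix (Fin n) (Fin n) ℂ, L (A ⊗ₖ B) = Phi n J lam A ⊗ₖ Phi n J lam B) ∧
      (∀ ψ : Fin n × Fin n → ℂ,
        MatSeparable n (L (Matrix.of fun u v : Fin n × Fin n => ψ u * star (ψ v))))) :
    MatSeparable n
      ((1 : Matrix (Fin n) (Fin n) ℂ) ⊗ₖ (1 : Matrix (Fin n) (Fin n) ℂ) +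
        ((3 / (spinJ n * (spinJ n + 1)) : ℝ) : ℂ) •
          (((lam 0 ^ 2 : ℝ) : ℂ) • (J 0 ⊗ₖ J 0) - ((lam 1 ^ 2 : ℝ) : ℂ) • (J 1 ⊗ₖ J 1) +
            ((lam 2 ^ 2 : ℝ) : ℂ) • (J 2 ⊗ₖ J 2))) := by
  obtain ⟨L, hL, hsep⟩ := hlea
  have hΩ : L (of fun x y : Fin n × Fin n =>
        (if x.1 = x.2 then (1 : ℂ) else 0) * star (if y.1 = y.2 then (1 : ℂ) else 0)) =
      ∑ u : Fin n, ∑ v : Fin n, Phi n J lam (single u v 1) ⊗ₖ Phi n J lam (single u v 1) := by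
    simp only [← sum_single_kronecker_single_eq_outer_diag, map_sum, hL]
  have hsepΩ :=
    (hsep fun x => if x.1 = x.2 then 1 else 0).real_smul_of_nonneg (Nat.cast_nonneg n)
  rwa [hΩ, sum_Phi_single_kronecker_Phi_single hn J htr htr2 hT1 hT2 hT3, smul_smul,
    ← Complex.ofReal_mul, mul_one_div_cancel (by positivity), Complex.ofReal_one, one_smul]
    at hsepΩ

theorem two_locally_entanglement_annihilating_implies_square_eb
    (n : ℕ) (hn : 2 ≤ n) (J : Fin 3 → Matrix (Fin n) (Fin n) ℂ)
    (hherm : ∀ i, (J i).IsHermitian)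
    (htr : ∀ i, (J i).trace = 0)
    (htr2 : ∀ k l, (J k * J l).trace =
      if k = l then ((spinJ n * (spinJ n + 1) * (2 * spinJ n + 1) / 3 : ℝ) : ℂ) else 0)
    (hT1 : (J 0)ᵀ = J 0) (hT2 : (J 1)ᵀ = -(J 1)) (hT3 : (J 2)ᵀ = J 2)
    (lam : Fin 3 → ℝ)
    (hlea : ∃ L : Matrix (Fin n × Fin n) (Fin n × Fin n) ℂ →ₗ[ℂ]
          Matrix (Fin n × Fin n) (Fin n × Fin n) ℂ,
      (∀ A B : Matrix (Fin n) (Fin n) ℂ, L (A ⊗ₖ B) = Phi n J lam A ⊗ₖ Phi n J lam B) ∧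
      (∀ ψ : Fin n × Fin n → ℂ,
        MatSeparable n (L (Matrix.of fun u v : Fin n × Fin n => ψ u * star (ψ v))))) :
    MatSeparable n
      ((1 : Matrix (Fin n) (Fin n) ℂ) ⊗ₖ (1 : Matrix (Fin n) (Fin n) ℂ) +
        ((3 / (spinJ n * (spinJ n + 1)) : ℝ) : ℂ) •
          (((lam 0 ^ 2 : ℝ) : ℂ) • (J 0 ⊗ₖ J 0) - ((lam 1 ^ 2 : ℝ) : ℂ) • (J 1 ⊗ₖ J 1) +
            ((lam 2 ^ 2 : ℝ) : ℂ) • (J 2 ⊗ₖ J 2))) :=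
  two_locally_entanglement_annihilating_implies_square_eb_general n hn J htr htr2 hT1 hT2 hT3 lam
    hlea
end
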